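/- arXiv:2005.09424 — 3 statements merged into one kernel-verified Lean document; each statement's English description precedes it below -/
import Mathlib

section
/- Let Φ be a C^2 function on ℝ that is strictly increasing, odd, satisfies x·Φ''(x) < 0 for x ≠ 0. Then for all b ∈ ℝ and σ > 0: b · E_{b,σ}[Φ(η) Φ'(η)] ≥ 0, where η ~ N(b,σ). -/
/-!
The integrand `Φ Φ'` is odd and nonnegative on `[0, ∞)`, since `Φ' ≥ 0` is even. For such an `f`
and the Gaussian density `p` with mean `b`, symmetrizing gives
`2 b E_{b,σ}[f] = ∫ b (p(x) - p(-x)) f(x) dx`, and `b (p(x) - p(-x))` has the sign of `x`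
because `(x + b)² - (x - b)² = 4 b x`.
-/

open MeasureTheory ProbabilityTheory Real
open scoped NNReal

/-- Gaussian expectation with mean `b` and variance `σ`. -/
noncomputable def gE (b σ : ℝ) (f : ℝ → ℝ) : ℝ :=
  ∫ x, f x ∂(gaussianReal b σ.toNNReal)

lemma Function.Odd.deriv_even {f : ℝ → ℝ} (hf : f.Odd) : (deriv f).Even := fun x => by
  have h := congrArg (fun g : ℝ → ℝ => deriv g x) (funext hf)
  simp only [deriv_comp_neg, deriv.fun_neg] at h
  linarith

lemma Function.Odd.self_mul_apply_nonneg {f : ℝ → ℝ} (hf : f.Odd) (hnonneg : ∀ x, 0 ≤ x → 0 ≤ f x)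
    (x : ℝ) : 0 ≤ x * f x := by
  rcases le_total 0 x with hx | hx
  · exact mul_nonneg hx (hnonneg x hx)
  · nlinarith [hnonneg (-x) (neg_nonneg.2 hx), hf x]

lemma gaussianPDFReal_le_of_sq_le {μ : ℝ} (v : ℝ≥0) {x y : ℝ} (h : (x - μ) ^ 2 ≤ (y - μ) ^ 2) :
    gaussianPDFReal μ v y ≤ gaussianPDFReal μ v x := by
  simp only [gaussianPDFReal]
  gcongr

lemma mul_sub_gaussianPDFReal_neg_nonneg (μ : ℝ) (v : ℝ≥0) {x : ℝ} (hx : 0 ≤ x) :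
    0 ≤ μ * (gaussianPDFReal μ v x - gaussianPDFReal μ v (-x)) := by
  rcases le_total 0 μ with hμ | hμ
  · exact mul_nonneg hμ <| sub_nonneg.2 <| gaussianPDFReal_le_of_sq_le v <| by nlinarith
  · exact mul_nonneg_of_nonpos_of_nonpos hμ <| sub_nonpos.2 <|
      gaussianPDFReal_le_of_sq_le v <| by nlinarith

lemma mul_sub_gaussianPDFReal_neg_mul_nonneg {f : ℝ → ℝ} (hf : f.Odd)
    (hnonneg : ∀ x, 0 ≤ x → 0 ≤ f x) (μ : ℝ) (v : ℝ≥0) (x : ℝ) :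
    0 ≤ μ * (gaussianPDFReal μ v x - gaussianPDFReal μ v (-x)) * f x := by
  rcases le_total 0 x with hx | hx
  · exact mul_nonneg (mul_sub_gaussianPDFReal_neg_nonneg μ v hx) (hnonneg x hx)
  · have h := mul_nonneg (mul_sub_gaussianPDFReal_neg_nonneg μ v (neg_nonneg.2 hx))
      (hnonneg (-x) (neg_nonneg.2 hx))
    rw [neg_neg, hf.eq] at h
    linarith

lemma integral_mul_sub_gaussianPDFReal_neg_mul {f : ℝ → ℝ} (hf : f.Odd) {μ : ℝ} {v : ℝ≥0}
    (hint : Integrable fun x => gaussianPDFReal μ v x * f x) :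
    ∫ x, μ * (gaussianPDFReal μ v x - gaussianPDFReal μ v (-x)) * f x =
      2 * (μ * ∫ x, gaussianPDFReal μ v x * f x) := by
  set p := gaussianPDFReal μ v
  have hint_refl : Integrable fun x => p (-x) * f x := by
    simpa [hf.eq] using hint.comp_neg.neg
  have hrefl : ∫ x, p (-x) * f x = -∫ x, p x * f x := by
    rw [← integral_neg_eq_self (fun x => p x * f x), ← integral_neg]
    simp only [hf.eq, mul_neg, neg_neg]
  simp only [mul_sub, sub_mul, mul_assoc]
  rw [integral_sub (hint.const_mul μ) (hint_refl.const_mul μ), integral_const_mul,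
    integral_const_mul, hrefl]
  ring

theorem mul_integral_gaussianReal_nonneg_of_odd {f : ℝ → ℝ} (hf : f.Odd)
    (hnonneg : ∀ x, 0 ≤ x → 0 ≤ f x) (μ : ℝ) (v : ℝ≥0) :
    0 ≤ μ * ∫ x, f x ∂gaussianReal μ v := by
  rcases eq_or_ne v 0 with rfl | hv
  · simpa [gaussianReal_zero_var] using hf.self_mul_apply_nonneg hnonneg μ
  rw [integral_gaussianReal_eq_integral_smul hv]
  simp only [smul_eq_mul]
  by_cases hint : Integrable fun x => gaussianPDFReal μ v x * f x
  · have h : 0 ≤ ∫ x, μ * (gaussianPDFReal μ v x - gaussianPDFReal μ v (-x)) * f x :=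
      integral_nonneg (mul_sub_gaussianPDFReal_neg_mul_nonneg hf hnonneg μ v)
    rw [integral_mul_sub_gaussianPDFReal_neg_mul hf hint] at h
    linarith
  · rw [integral_undef hint, mul_zero]

theorem bias_term_nonneg_general
    (Φ : ℝ → ℝ) (hmono : StrictMono Φ)
    (hodd : ∀ x, Φ (-x) = -Φ x) :
    ∀ (b σ : ℝ), 0 < σ →
      0 ≤ b * gE b σ (fun x => Φ x * deriv Φ x) := by
  intro b σ _
  have hΦ : Φ.Odd := hodd
  have hΦΦ' : (fun x => Φ x * deriv Φ x).Odd := hΦ.mul_even hΦ.deriv_even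
  have hΦΦ'_nonneg : ∀ x, 0 ≤ x → 0 ≤ Φ x * deriv Φ x := fun x hx =>
    mul_nonneg (hΦ.map_zero ▸ hmono.monotone hx) hmono.monotone.deriv_nonneg
  exact mul_integral_gaussianReal_nonneg_of_odd hΦΦ' hΦΦ'_nonneg b σ.toNNReal

/-- for `Φ` C², strictly increasing, odd, with `x Φ''(x) < 0` for
`x ≠ 0`, one has `b · E_{b,σ}[Φ(η)Φ'(η)] ≥ 0` for all `b ∈ ℝ`, `σ > 0`. -/
theorem bias_term_nonneg
    (Φ : ℝ → ℝ) (hC2 : ContDiff ℝ 2 Φ) (hmono : StrictMono Φ)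
    (hodd : ∀ x, Φ (-x) = -Φ x)
    (hconc : ∀ x ≠ 0, x * deriv (deriv Φ) x < 0) :
    ∀ (b σ : ℝ), 0 < σ →
      0 ≤ b * gE b σ (fun x => Φ x * deriv Φ x) :=
  bias_term_nonneg_general Φ hmono hodd
end

section
/- Let Φ: ℝ → ℝ be C^2, strictly increasing, odd, with x·Φ''(x) < 0 for x ≠ 0 and E_{0,1}[|Φ|] bounded. Then for every b ∈ ℝ and σ > 0: E_{b,σ}[Φ(η)²] > E_{b,σ}[η Φ(η) Φ'(η)], where η ~ N(b,σ). -/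
open MeasureTheory ProbabilityTheory Real

lemma integral_lt_integral_of_ae_lt {α : Type*} [MeasurableSpace α] {μ : Measure α} [NeZero μ]
    {f g : α → ℝ} (hf : Integrable f μ) (hg : Integrable g μ) (hlt : ∀ᵐ x ∂μ, f x < g x) :
    ∫ x, f x ∂μ < ∫ x, g x ∂μ := by
  have hsupp : 0 < μ (Function.support (g - f)) := by
    refine pos_iff_ne_zero.2 fun hnull => ?_
    obtain ⟨x, hx, hxsupp⟩ := (hlt.and (measure_eq_zero_iff_ae_notMem.1 hnull)).exists
    exact hxsupp (sub_ne_zero.2 hx.ne')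
  have hpos := (integral_pos_iff_support_of_nonneg_ae
    (hlt.mono fun x hx => (sub_pos.2 hx).le) (hg.sub hf)).2 hsupp
  rwa [integral_sub hg hf, sub_pos] at hpos

lemma Function.Odd.deriv {f : ℝ → ℝ} (hodd : Function.Odd f) : Function.Even (deriv f) := by
  intro x
  have h := deriv_comp_neg (f := f) (x := x)
  rw [show (fun y => f (-y)) = fun y => -f y from funext hodd, deriv.fun_neg] at h
  linarith

lemma mul_deriv_lt_of_deriv_deriv_neg {f : ℝ → ℝ} (hf : Differentiable ℝ f) (h0 : f 0 = 0)
    (hf'' : ∀ x > 0, deriv (deriv f) x < 0) {x : ℝ} (hx : 0 < x) : x * deriv f x < f x := by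
  have hconc : StrictConcaveOn ℝ (Set.Ici 0) f :=
    strictConcaveOn_of_deriv2_neg (convex_Ici 0) hf.continuous.continuousOn (by simpa using hf'')
  have hslope := hconc.deriv_lt_slope Set.self_mem_Ici hx.le hx (hf x)
  rw [slope_def_field, h0, sub_zero, sub_zero, lt_div_iff₀ hx] at hslope
  linarith

lemma mul_mul_deriv_lt_sq_of_odd {f : ℝ → ℝ} (hf : Differentiable ℝ f) (hodd : Function.Odd f)
    (hpos : ∀ x > 0, 0 < f x) (hf'' : ∀ x > 0, deriv (deriv f) x < 0) {x : ℝ} (hx : x ≠ 0) :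
    x * f x * deriv f x < f x ^ 2 := by
  have hpos_case : ∀ y > 0, y * f y * deriv f y < f y ^ 2 := fun y hy => by
    nlinarith [mul_deriv_lt_of_deriv_deriv_neg hf hodd.map_zero hf'' hy, hpos y hy]
  rcases hx.lt_or_gt with hneg | hposx
  · have h := hpos_case (-x) (neg_pos.2 hneg)
    rw [hodd x, hodd.deriv x] at h
    linarith
  · exact hpos_case x hposx

theorem second_moment_dominates_general
    (Φ : ℝ → ℝ) (hC2 : ContDiff ℝ 2 Φ) (hmono : StrictMono Φ)
    (hodd : ∀ x, Φ (-x) = -Φ x)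
    (hconc : ∀ x ≠ 0, x * deriv (deriv Φ) x < 0)
    (b σ : ℝ) (hσ : 0 < σ)
    (hint1 : Integrable (fun x => Φ x ^ 2) (gaussianReal b σ.toNNReal))
    (hint2 : Integrable (fun x => x * Φ x * deriv Φ x) (gaussianReal b σ.toNNReal)) :
    gE b σ (fun x => x * Φ x * deriv Φ x) < gE b σ (fun x => Φ x ^ 2) := by
  have hpos : ∀ x > 0, 0 < Φ x := fun x hx => by
    simpa [Function.Odd.map_zero hodd] using hmono hx
  have hΦ'' : ∀ x > 0, deriv (deriv Φ) x < 0 := fun x hx =>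
    neg_of_mul_neg_right (hconc x hx.ne') hx.le
  have : NullSingletonClass (gaussianReal b σ.toNNReal) :=
    nullSingletonClass_gaussianReal (μ := b) (Real.toNNReal_pos.2 hσ).ne'
  refine integral_lt_integral_of_ae_lt hint2 hint1 ?_
  filter_upwards [Measure.ae_ne _ 0] with x hx
  exact mul_mul_deriv_lt_sq_of_odd (hC2.differentiable (by norm_num)) hodd hpos hΦ'' hx

/-- for `Φ` C², strictly increasing, odd, with `x Φ''(x) < 0` for
`x ≠ 0` and Gaussian-integrable, `E_{b,σ}[Φ(η)²] > E_{b,σ}[η Φ(η) Φ'(η)]`. -/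
theorem second_moment_dominates
    (Φ : ℝ → ℝ) (hC2 : ContDiff ℝ 2 Φ) (hmono : StrictMono Φ)
    (hodd : ∀ x, Φ (-x) = -Φ x)
    (hconc : ∀ x ≠ 0, x * deriv (deriv Φ) x < 0)
    (hint : Integrable (fun x => |Φ x|) (gaussianReal 0 1))
    (b σ : ℝ) (hσ : 0 < σ)
    (hint1 : Integrable (fun x => Φ x ^ 2) (gaussianReal b σ.toNNReal))
    (hint2 : Integrable (fun x => x * Φ x * deriv Φ x) (gaussianReal b σ.toNNReal)) :
    gE b σ (fun x => x * Φ x * deriv Φ x) < gE b σ (fun x => Φ x ^ 2) :=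
  second_moment_dominates_general Φ hC2 hmono hodd hconc b σ hσ hint1 hint2
end

section
/- (Guerra–Latala lemma, generalized form) Let b ∈ ℝ, let f, g: (0,∞) → (0,∞) be differentiable, positive, increasing functions, and let Φ be as in the canonical hypotheses (C², strictly increasing, odd, xΦ''(x)<0 for x≠0). Define Ψ(x) := E_{b, f(x)}[Φ(η)²] / g(x), where η ~ N(b, f(x)). Then Ψ'(x) = Ψ(x) · ( f'(x) c_{b,f(x)}[Φ] / f(x) − g'(x)/g(x) ). In particular, Ψ is decreasing at x whenever g'(x) f(x) ≥ c_{b,f(x)}[Φ] f'(x) g(x), and increasing otherwise. -/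
/-!
Write `η = √σ z + b` with `z` standard normal. Differentiating `E[Φ(√σ z + b)²]` under the
integral in `σ` gives `E[z Φ Φ'(η)] / √σ = E[(η - b) Φ Φ'(η)] / σ`; the interchange is dominated
because a canonical `Φ` has `|Φ'| ≤ Φ'(0)` (`Φ'` is even and decreasing on `[0, ∞)`), so `Φ`
grows at most linearly. The chain and quotient rules then give `Ψ'`, and its sign is that of
`f' c / f - g' / g` since `E[Φ²] > 0` for injective `Φ`.
-/

open MeasureTheory ProbabilityTheory Real Set

/-- The constant `c_{b,σ}[Φ] = E_{b,σ}[(η−b)Φ(η)Φ'(η)] / E_{b,σ}[Φ(η)²]`. -/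
noncomputable def cConst (Φ : ℝ → ℝ) (b σ : ℝ) : ℝ :=
  gE b σ (fun x => (x - b) * Φ x * deriv Φ x) / gE b σ (fun x => Φ x ^ 2)

open Filter
open scoped NNReal

section GaussianReal

variable {μ : ℝ} {v : ℝ≥0}

lemma integrable_abs_gaussianReal : Integrable (fun z => |z|) (gaussianReal μ v) :=
  (memLp_one_iff_integrable.1 (memLp_id_gaussianReal' 1 ENNReal.one_ne_top)).abs

lemma integrable_sq_gaussianReal : Integrable (fun z => z ^ 2) (gaussianReal μ v) :=
  (by simpa using memLp_id_gaussianReal (μ := μ) (v := v) 2 : MemLp id 2 _).integrable_sq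

lemma integrable_affine_abs_mul_abs_gaussianReal (α β : ℝ) :
    Integrable (fun z => (α + β * |z|) * |z|) (gaussianReal μ v) := by
  refine ((integrable_abs_gaussianReal.const_mul α).add
    (integrable_sq_gaussianReal.const_mul β)).congr (ae_of_all _ fun z => ?_)
  simp only [Pi.add_apply, ← sq_abs z]
  ring

lemma gaussianReal_toNNReal_eq_map (b σ : ℝ) :
    gaussianReal b σ.toNNReal = (gaussianReal 0 1).map (fun z => √σ * z + b) := by
  calc gaussianReal b σ.toNNReal = ((gaussianReal 0 1).map (√σ * ·)).map (· + b) := by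
        rw [gaussianReal_map_const_mul, gaussianReal_map_add_const, mul_zero, zero_add]
        congr 1; ext; simp [Real.sq_sqrt']
    _ = _ := Measure.map_map (measurable_add_const b) (measurable_const_mul _)

end GaussianReal

lemma measurableEmbedding_affine {a : ℝ} (ha : a ≠ 0) (b : ℝ) :
    MeasurableEmbedding (fun z => a * z + b) :=
  (measurableEmbedding_addRight b).comp (measurableEmbedding_mulLeft₀ ha)

lemma gE_eq_integral_std (b : ℝ) {σ : ℝ} (hσ : 0 < σ) (F : ℝ → ℝ) :
    gE b σ F = ∫ z, F (√σ * z + b) ∂gaussianReal 0 1 := by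
  rw [gE, gaussianReal_toNNReal_eq_map,
    (measurableEmbedding_affine (sqrt_pos.2 hσ).ne' b).integral_map]

lemma integrable_comp_std_iff (b : ℝ) {σ : ℝ} (hσ : 0 < σ) {F : ℝ → ℝ} :
    Integrable (fun z => F (√σ * z + b)) (gaussianReal 0 1) ↔
      Integrable F (gaussianReal b σ.toNNReal) := by
  rw [gaussianReal_toNNReal_eq_map,
    (measurableEmbedding_affine (sqrt_pos.2 hσ).ne' b).integrable_map_iff]
  rfl

lemma abs_deriv_comp_std_mul_le {F : ℝ → ℝ} {C : ℝ} (hF' : ∀ t, |deriv F t| ≤ C * (1 + |t|))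
    {σ s : ℝ} (hs : σ / 2 < s ∧ s < 2 * σ) (b z : ℝ) :
    |deriv F (√s * z + b) * (1 / (2 * √s) * z)| ≤
      C / (2 * √(σ / 2)) * ((1 + |b| + √(2 * σ) * |z|) * |z|) := by
  have hsqrt : √(σ / 2) ≤ √s := sqrt_le_sqrt hs.1.le
  have hsqrt_pos : 0 < √(σ / 2) := sqrt_pos.2 (by linarith)
  have hs_pos : 0 < √s := hsqrt_pos.trans_le hsqrt
  have hC : 0 ≤ C := by simpa using (abs_nonneg _).trans (hF' 0)
  have harg : |√s * z + b| ≤ |b| + √(2 * σ) * |z| := by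
    calc |√s * z + b| ≤ √s * |z| + |b| := by
          simpa [abs_mul, abs_of_nonneg (sqrt_nonneg s)] using abs_add_le (√s * z) b
      _ ≤ |b| + √(2 * σ) * |z| := by rw [add_comm]; gcongr; exact hs.2.le
  have hfactor : |1 / (2 * √s) * z| ≤ |z| / (2 * √(σ / 2)) := by
    rw [abs_mul, abs_of_pos (by positivity), one_div_mul_eq_div]
    gcongr
  calc |deriv F (√s * z + b) * (1 / (2 * √s) * z)|
      ≤ C * (1 + (|b| + √(2 * σ) * |z|)) * (|z| / (2 * √(σ / 2))) := by
        rw [abs_mul]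
        exact mul_le_mul ((hF' _).trans (by gcongr)) hfactor (abs_nonneg _) (by positivity)
    _ = C / (2 * √(σ / 2)) * ((1 + |b| + √(2 * σ) * |z|) * |z|) := by ring

theorem hasDerivAt_gE {F : ℝ → ℝ} {C : ℝ} (hF : Differentiable ℝ F)
    (hF' : ∀ t, |deriv F t| ≤ C * (1 + |t|)) (b : ℝ) {σ : ℝ} (hσ : 0 < σ)
    (hFint : Integrable F (gaussianReal b σ.toNNReal)) :
    HasDerivAt (fun s => gE b s F) (gE b σ (fun u => (u - b) * deriv F u) / (2 * σ)) σ := by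
  have hball : ∀ s ∈ Metric.ball σ (σ / 2), σ / 2 < s ∧ s < 2 * σ := fun s hs => by
    rw [Metric.mem_ball, Real.dist_eq, abs_lt] at hs
    constructor <;> linarith
  obtain ⟨-, hderiv⟩ := hasDerivAt_integral_of_dominated_loc_of_deriv_le
    (F := fun s z => F (√s * z + b)) (F' := fun s z => deriv F (√s * z + b) * (1 / (2 * √s) * z))
    (μ := gaussianReal 0 1) (x₀ := σ) (s := Metric.ball σ (σ / 2))
    (Metric.ball_mem_nhds σ (half_pos hσ))
    (Eventually.of_forall fun s => (hF.continuous.comp (by fun_prop)).aestronglyMeasurable)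
    ((integrable_comp_std_iff b hσ).2 hFint)
    (((measurable_deriv F).comp (by fun_prop)).mul (by fun_prop)).aestronglyMeasurable
    (ae_of_all _ fun z s hs => abs_deriv_comp_std_mul_le hF' (hball s hs) b z)
    ((integrable_affine_abs_mul_abs_gaussianReal _ _).const_mul _)
    (ae_of_all _ fun z s hs =>
      (hF _).hasDerivAt.comp s
        (((hasDerivAt_sqrt (hball s hs |>.1 |>.trans' (half_pos hσ)).ne').mul_const z).add_const b))
  have hstd : (fun s => gE b s F) =ᶠ[nhds σ] fun s => ∫ z, F (√s * z + b) ∂gaussianReal 0 1 := by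
    filter_upwards [Ioi_mem_nhds hσ] with s hs using gE_eq_integral_std b hs F
  refine (hderiv.congr_of_eventuallyEq hstd).congr_deriv ?_
  rw [gE_eq_integral_std b hσ, ← integral_div]
  congr 1 with z
  field_simp
  linear_combination (-z * deriv F (√σ * z + b)) * mul_self_sqrt hσ.le

section BoundedDerivative

variable {Φ : ℝ → ℝ} {K : ℝ}

lemma abs_le_abs_zero_add_of_abs_deriv_le (hΦ : Differentiable ℝ Φ)
    (hK : ∀ x, |deriv Φ x| ≤ K) (x : ℝ) : |Φ x| ≤ |Φ 0| + K * |x| := by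
  have h := convex_univ.norm_image_sub_le_of_norm_deriv_le (fun y _ => hΦ y)
    (fun y _ => (Real.norm_eq_abs _).trans_le (hK y)) (mem_univ 0) (mem_univ x)
  simp only [Real.norm_eq_abs, sub_zero] at h
  linarith [abs_sub_abs_le_abs_sub (Φ x) (Φ 0)]

lemma integrable_sq_of_abs_deriv_le (hΦ : Differentiable ℝ Φ) (hK : ∀ x, |deriv Φ x| ≤ K)
    (μ : ℝ) (v : ℝ≥0) : Integrable (fun u => Φ u ^ 2) (gaussianReal μ v) := by
  refine ((integrable_const (2 * Φ 0 ^ 2)).add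
    ((integrable_sq_gaussianReal (μ := μ) (v := v)).const_mul (2 * K ^ 2))).mono'
    (hΦ.continuous.pow 2).aestronglyMeasurable (ae_of_all _ fun u => ?_)
  have h := abs_le_abs_zero_add_of_abs_deriv_le hΦ hK u
  have hK0 : 0 ≤ K := (abs_nonneg _).trans (hK 0)
  rw [Real.norm_eq_abs, abs_pow, Pi.add_apply]
  nlinarith [abs_nonneg (Φ u), abs_nonneg u, sq_abs (Φ 0), sq_abs u,
    sq_nonneg (|Φ 0| - K * |u|), mul_nonneg hK0 (abs_nonneg u)]

theorem hasDerivAt_gE_sq (hΦ : Differentiable ℝ Φ) (hK : ∀ x, |deriv Φ x| ≤ K)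
    (b : ℝ) {σ : ℝ} (hσ : 0 < σ) :
    HasDerivAt (fun s => gE b s (fun u => Φ u ^ 2))
      (gE b σ (fun u => (u - b) * Φ u * deriv Φ u) / σ) σ := by
  have hsq : ∀ u, HasDerivAt (fun u => Φ u ^ 2) (2 * Φ u * deriv Φ u) u := fun u => by
    simpa using (hΦ u).hasDerivAt.fun_pow 2
  have hK0 : 0 ≤ K := (abs_nonneg _).trans (hK 0)
  have hbound : ∀ t, |deriv (fun u => Φ u ^ 2) t| ≤ 2 * K * (|Φ 0| + K) * (1 + |t|) := fun t => by
    rw [(hsq t).deriv, abs_mul, abs_mul, abs_two]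
    have h := abs_le_abs_zero_add_of_abs_deriv_le hΦ hK t
    have := mul_le_mul h (hK t) (abs_nonneg _) (by positivity)
    nlinarith [abs_nonneg (Φ 0), abs_nonneg t, mul_nonneg hK0 (abs_nonneg t)]
  convert hasDerivAt_gE (hΦ.fun_pow 2) hbound b hσ
    (integrable_sq_of_abs_deriv_le hΦ hK _ _) using 1
  simp only [gE, (hsq _).deriv]
  rw [show (fun u => (u - b) * (2 * Φ u * deriv Φ u)) = fun u => 2 * ((u - b) * Φ u * deriv Φ u)
    by ext; ring, integral_const_mul]
  field_simp

end BoundedDerivative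

lemma gE_sq_pos {Φ : ℝ → ℝ} (hinj : Function.Injective Φ) (b : ℝ) {σ : ℝ} (hσ : 0 < σ)
    (hint : Integrable (fun u => Φ u ^ 2) (gaussianReal b σ.toNNReal)) :
    0 < gE b σ (fun u => Φ u ^ 2) := by
  have hzeros : (gaussianReal b σ.toNNReal) {u | Φ u = 0} = 0 :=
    gaussianReal_absolutelyContinuous b (by simpa using hσ)
      (Set.Subsingleton.measure_zero (fun x hx y hy => hinj (hx.trans hy.symm)) _)
  rw [gE, integral_pos_iff_support_of_nonneg (fun u => sq_nonneg _) hint]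
  have hsupport : Function.support (fun u => Φ u ^ 2) = {u | Φ u = 0}ᶜ := by
    ext u; simp
  rw [hsupport, measure_congr (ae_eq_univ.2 (by rwa [compl_compl])), measure_univ]
  exact one_pos

lemma abs_deriv_le_deriv_zero {Φ : ℝ → ℝ} (hΦ : ContDiff ℝ 2 Φ) (hmono : Monotone Φ)
    (hodd : ∀ x, Φ (-x) = -Φ x) (hconc : ∀ x, 0 < x → deriv (deriv Φ) x ≤ 0) (x : ℝ) :
    |deriv Φ x| ≤ deriv Φ 0 := by
  have heven : ∀ y, deriv Φ (-y) = deriv Φ y := fun y => by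
    have h := deriv_comp_neg Φ y
    simp only [hodd, deriv.fun_neg] at h
    linarith
  have hanti : AntitoneOn (deriv Φ) (Ici 0) :=
    antitoneOn_of_deriv_nonpos (convex_Ici 0) (hΦ.continuous_deriv one_le_two).continuousOn
      hΦ.differentiable_deriv_two.differentiableOn
      (fun y hy => hconc y (by simpa using hy))
  have habs : deriv Φ |x| = deriv Φ x := by
    rcases abs_choice x with h | h <;> rw [h]
    exact heven x
  rw [abs_of_nonneg hmono.deriv_nonneg, ← habs]
  exact hanti self_mem_Ici (abs_nonneg x) (abs_nonneg x)

theorem guerra_latala_general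
    (Φ : ℝ → ℝ) (hC2 : ContDiff ℝ 2 Φ) (hmono : StrictMono Φ)
    (hodd : ∀ x, Φ (-x) = -Φ x)
    (hconc : ∀ x ≠ 0, x * deriv (deriv Φ) x < 0)
    (b : ℝ) (f g : ℝ → ℝ)
    (hfpos : ∀ x ∈ Ioi (0:ℝ), 0 < f x) (hgpos : ∀ x ∈ Ioi (0:ℝ), 0 < g x)
    (hfdiff : ∀ x ∈ Ioi (0:ℝ), DifferentiableAt ℝ f x)
    (hgdiff : ∀ x ∈ Ioi (0:ℝ), DifferentiableAt ℝ g x) :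
    ∀ x ∈ Ioi (0:ℝ),
      HasDerivAt (fun y => gE b (f y) (fun u => Φ u ^ 2) / g y)
        ((gE b (f x) (fun u => Φ u ^ 2) / g x) *
          (deriv f x * cConst Φ b (f x) / f x - deriv g x / g x)) x ∧
      (deriv g x * f x ≥ cConst Φ b (f x) * deriv f x * g x →
        deriv (fun y => gE b (f y) (fun u => Φ u ^ 2) / g y) x ≤ 0) ∧
      (deriv g x * f x < cConst Φ b (f x) * deriv f x * g x →
        0 < deriv (fun y => gE b (f y) (fun u => Φ u ^ 2) / g y) x) := by
  have hΦ : Differentiable ℝ Φ := hC2.differentiable two_ne_zero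
  have hK : ∀ x, |deriv Φ x| ≤ deriv Φ 0 :=
    abs_deriv_le_deriv_zero hC2 hmono.monotone hodd fun x hx =>
      nonpos_of_mul_nonpos_right (hconc x hx.ne').le hx
  intro x hx
  have hfx := hfpos x hx
  have hgx := hgpos x hx
  have hE : 0 < gE b (f x) (fun u => Φ u ^ 2) :=
    gE_sq_pos hmono.injective b hfx (integrable_sq_of_abs_deriv_le hΦ hK _ _)
  have hΨ : HasDerivAt (fun y => gE b (f y) (fun u => Φ u ^ 2) / g y)
      ((gE b (f x) (fun u => Φ u ^ 2) / g x) *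
        (deriv f x * cConst Φ b (f x) / f x - deriv g x / g x)) x := by
    refine (((hasDerivAt_gE_sq hΦ hK b hfx).comp x (hfdiff x hx).hasDerivAt).div
      (hgdiff x hx).hasDerivAt hgx.ne').congr_deriv ?_
    rw [cConst, Function.comp_apply]
    generalize gE b (f x) (fun u => (u - b) * Φ u * deriv Φ u) = E₁
    field_simp
  refine ⟨hΨ, fun hge => ?_, fun hlt => ?_⟩ <;> rw [hΨ.deriv]
  · refine mul_nonpos_of_nonneg_of_nonpos (div_pos hE hgx).le ?_
    rw [sub_nonpos, div_le_div_iff₀ hfx hgx]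
    linarith
  · refine mul_pos (div_pos hE hgx) ?_
    rw [sub_pos, div_lt_div_iff₀ hgx hfx]
    linarith

/-- generalized Guerra–Latala lemma: for positive increasing
differentiable `f, g` on `(0,∞)` and canonical `Φ`, the function
`Ψ(x) = E_{b,f(x)}[Φ²]/g(x)` satisfies
`Ψ'(x) = Ψ(x) (f'(x) c_{b,f(x)}[Φ]/f(x) − g'(x)/g(x))`; in particular `Ψ` is
decreasing at `x` when `g' f ≥ c_{b,f}[Φ] f' g` and increasing otherwise. -/
theorem guerra_latala
    (Φ : ℝ → ℝ) (hC2 : ContDiff ℝ 2 Φ) (hmono : StrictMono Φ)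
    (hodd : ∀ x, Φ (-x) = -Φ x)
    (hconc : ∀ x ≠ 0, x * deriv (deriv Φ) x < 0)
    (hint : Integrable (fun x => |Φ x|) (gaussianReal 0 1))
    (b : ℝ) (f g : ℝ → ℝ)
    (hfpos : ∀ x ∈ Ioi (0:ℝ), 0 < f x) (hgpos : ∀ x ∈ Ioi (0:ℝ), 0 < g x)
    (hfdiff : ∀ x ∈ Ioi (0:ℝ), DifferentiableAt ℝ f x)
    (hgdiff : ∀ x ∈ Ioi (0:ℝ), DifferentiableAt ℝ g x)
    (hfmono : MonotoneOn f (Ioi 0)) (hgmono : MonotoneOn g (Ioi 0)) :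
    ∀ x ∈ Ioi (0:ℝ),
      HasDerivAt (fun y => gE b (f y) (fun u => Φ u ^ 2) / g y)
        ((gE b (f x) (fun u => Φ u ^ 2) / g x) *
          (deriv f x * cConst Φ b (f x) / f x - deriv g x / g x)) x ∧
      (deriv g x * f x ≥ cConst Φ b (f x) * deriv f x * g x →
        deriv (fun y => gE b (f y) (fun u => Φ u ^ 2) / g y) x ≤ 0) ∧
      (deriv g x * f x < cConst Φ b (f x) * deriv f x * g x →
        0 < deriv (fun y => gE b (f y) (fun u => Φ u ^ 2) / g y) x) :=
  guerra_latala_general Φ hC2 hmono hodd hconc b f g hfpos hgpos hfdiff hgdiff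
end
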